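/- arXiv:2604.10469 — 3 statements merged into one kernel-verified Lean document; each statement's English description precedes it below -/
import Mathlib

section
/- Let h_c denote the c-th canonical Hoeffding projection of h, for 1 ≤ c ≤ k. For any two distinct subsets C_1, C_2 ⊆ {1,...,k} with C_1 ≠ C_2, the projections indexed by C_1 and C_2 are orthogonal in L²(P^{⊗k}): ∫ h_{|C_1|}(z_{C_1}) · h_{|C_2|}(z_{C_2}) dP^{⊗k}(z_1,...,z_k) = 0. -/
open MeasureTheory Finset

/-- Marginal conditional expectation `E_J`: integrate out the coordinates outside `J`. -/
noncomputable def margE {Z : Type*} [MeasurableSpace Z] (P : Measure Z) {k : ℕ}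
    (h : (Fin k → Z) → ℝ) (J : Finset (Fin k)) (z : Fin k → Z) : ℝ :=
  ∫ w : Fin k → Z, h (fun i => if i ∈ J then z i else w i) ∂(Measure.pi fun _ : Fin k => P)

/-- Canonical Hoeffding projection indexed by a subset `C`:
`h_{|C|}(z_C) = Σ_{J ⊆ C} (−1)^{|C|−|J|} E_J(z_J)`. -/
noncomputable def hoeffProj {Z : Type*} [MeasurableSpace Z] (P : Measure Z) {k : ℕ}
    (h : (Fin k → Z) → ℝ) (C : Finset (Fin k)) (z : Fin k → Z) : ℝ :=
  ∑ J ∈ C.powerset, (-1 : ℝ) ^ (C.card - J.card) * margE P h J z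

/-!
Write `∫ E_{J₁} E_{J₂}` as an integral over three independent samples `(z, w₁, w₂)` of
`h(z on J₁, w₁ elsewhere) · h(z on J₂, w₂ elsewhere)`. Exchanging the coordinates in `J₁ \ J₂`
between `z` and `w₁` preserves the product measure and replaces `J₁` by `J₁ ∩ J₂`, so this cross
moment depends only on `J₁ ∩ J₂`. For `i ∈ C₁ \ C₂` and any `J₂ ⊆ C₂`, the terms of the alternating
sum over `J₁ ⊆ C₁` indexed by `J₁` and `insert i J₁` then cancel in pairs.
-/

section

variable {ι α : Type*} [Fintype ι] [DecidableEq ι] [MeasurableSpace α] (μ : ι → Measure α)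

theorem measurePreserving_piecewise_swap [∀ i, SigmaFinite (μ i)] (S : Finset ι) :
    MeasurePreserving (fun p : (ι → α) × (ι → α) => (S.piecewise p.2 p.1, S.piecewise p.1 p.2))
      ((Measure.pi μ).prod (Measure.pi μ)) ((Measure.pi μ).prod (Measure.pi μ)) := by
  have hswap : ∀ i, MeasurePreserving (fun x : α × α => if i ∈ S then x.swap else x)
      ((μ i).prod (μ i)) ((μ i).prod (μ i)) := by
    intro i
    split_ifs
    · exact Measure.measurePreserving_swap
    · exact MeasurePreserving.id _
  have e := measurePreserving_arrowProdEquivProdArrow α α ι μ μ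
  convert e.comp ((measurePreserving_pi _ _ hswap).comp e.symm) using 1
  ext p i <;> by_cases hi : i ∈ S <;>
    simp [hi, MeasurableEquiv.arrowProdEquivProdArrow, Equiv.arrowProdEquivProdArrow]

theorem measurePreserving_piecewise [∀ i, IsProbabilityMeasure (μ i)] (J : Finset ι) :
    MeasurePreserving (fun p : (ι → α) × (ι → α) => J.piecewise p.1 p.2)
      ((Measure.pi μ).prod (Measure.pi μ)) (Measure.pi μ) :=
  measurePreserving_snd.comp (measurePreserving_piecewise_swap μ J)

end

theorem Finset.sum_powerset_neg_one_pow_mul_inter_eq_zero {α R : Type*} [DecidableEq α]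
    [CommRing R] (f : Finset α → R) {C T : Finset α} (hCT : ¬C ⊆ T) :
    ∑ J ∈ C.powerset, (-1 : R) ^ (#C - #J) * f (J ∩ T) = 0 := by
  obtain ⟨i, hiC, hiT⟩ := not_subset.mp hCT
  rw [← insert_erase hiC, sum_powerset_insert (notMem_erase i C), ← sum_add_distrib]
  refine sum_eq_zero fun J hJ => ?_
  have hJC : J ⊆ C.erase i := mem_powerset.mp hJ
  have hiJ : i ∉ J := fun hi => notMem_erase i C (hJC hi)
  have hcard : #J < #C := (card_le_card hJC).trans_lt (card_erase_lt_of_mem hiC)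
  rw [insert_inter_of_notMem hiT, card_insert_of_notMem hiJ,
    card_insert_of_notMem (notMem_erase i C), card_erase_add_one hiC]
  obtain ⟨n, hn⟩ : ∃ n, #C - #J = n + 1 := ⟨#C - #J - 1, by omega⟩
  rw [hn, show #C - (#J + 1) = n by omega, pow_succ]
  ring

section Hoeffding

variable {Z : Type*} [MeasurableSpace Z] (P : Measure Z) [IsProbabilityMeasure P] {k : ℕ}
  {h : (Fin k → Z) → ℝ}

local notation "Pk" => Measure.pi fun _ : Fin k => P

variable (h) in
def margEMulIntegrand (J₁ J₂ : Finset (Fin k)) (q : (Fin k → Z) × (Fin k → Z) × (Fin k → Z)) :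
    ℝ :=
  h (J₁.piecewise q.1 q.2.1) * h (J₂.piecewise q.1 q.2.2)

theorem margE_mul_margE (J₁ J₂ : Finset (Fin k)) (z : Fin k → Z) :
    margE P h J₁ z * margE P h J₂ z = ∫ w, margEMulIntegrand h J₁ J₂ (z, w) ∂(Pk).prod Pk :=
  (integral_prod_mul _ _).symm

theorem integrable_margEMulIntegrand (hL2 : MemLp h 2 Pk) (J₁ J₂ : Finset (Fin k)) :
    Integrable (margEMulIntegrand h J₁ J₂) ((Pk).prod ((Pk).prod Pk)) := by
  have hfst := (measurePreserving_piecewise _ J₁).comp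
    ((MeasurePreserving.id Pk).prod (measurePreserving_fst (μ := Pk) (ν := Pk)))
  have hsnd := (measurePreserving_piecewise _ J₂).comp
    ((MeasurePreserving.id Pk).prod (measurePreserving_snd (μ := Pk) (ν := Pk)))
  exact (hL2.comp_measurePreserving hfst).integrable_mul (hL2.comp_measurePreserving hsnd)

theorem integrable_margE_mul_margE (hL2 : MemLp h 2 Pk) (J₁ J₂ : Finset (Fin k)) :
    Integrable (fun z => margE P h J₁ z * margE P h J₂ z) Pk := by
  simp_rw [margE_mul_margE]
  exact (integrable_margEMulIntegrand P hL2 J₁ J₂).integral_prod_left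

theorem integral_margE_mul_margE (hL2 : MemLp h 2 Pk) (J₁ J₂ : Finset (Fin k)) :
    ∫ z, margE P h J₁ z * margE P h J₂ z ∂Pk =
      ∫ q, margEMulIntegrand h J₁ J₂ q ∂(Pk).prod ((Pk).prod Pk) := by
  simp_rw [margE_mul_margE]
  exact (integral_prod _ (integrable_margEMulIntegrand P hL2 J₁ J₂)).symm

theorem integral_margE_mul_margE_inter (hL2 : MemLp h 2 Pk) (J₁ J₂ : Finset (Fin k)) :
    ∫ z, margE P h J₁ z * margE P h J₂ z ∂Pk =
      ∫ z, margE P h (J₁ ∩ J₂) z * margE P h J₂ z ∂Pk := by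
  set S := J₁ \ J₂
  let swap := fun q : (Fin k → Z) × (Fin k → Z) × (Fin k → Z) =>
    (S.piecewise q.2.1 q.1, S.piecewise q.1 q.2.1, q.2.2)
  have hswap : MeasurePreserving swap ((Pk).prod ((Pk).prod Pk)) ((Pk).prod ((Pk).prod Pk)) :=
    (measurePreserving_prodAssoc Pk Pk Pk).comp
      (((measurePreserving_piecewise_swap _ S).prod (MeasurePreserving.id Pk)).comp
        (measurePreserving_prodAssoc Pk Pk Pk).symm)
  have hcomp :
      (fun q => margEMulIntegrand h J₁ J₂ (swap q)) = margEMulIntegrand h (J₁ ∩ J₂) J₂ := by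
    ext ⟨z, w₁, w₂⟩
    simp only [margEMulIntegrand]
    congr 2 <;> ext i <;> by_cases h₁ : i ∈ J₁ <;> by_cases h₂ : i ∈ J₂ <;>
      simp [swap, Finset.piecewise, S, h₁, h₂]
  have hint := integrable_margEMulIntegrand P hL2 J₁ J₂
  have hmap := integral_map hswap.aemeasurable (hswap.map_eq ▸ hint.aestronglyMeasurable)
  rw [hswap.map_eq, hcomp] at hmap
  rw [integral_margE_mul_margE P hL2, integral_margE_mul_margE P hL2, hmap]

theorem integral_hoeffProj_mul_hoeffProj_eq_zero (hL2 : MemLp h 2 Pk) {C₁ C₂ : Finset (Fin k)}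
    (hC : ¬C₁ ⊆ C₂) :
    ∫ z, hoeffProj P h C₁ z * hoeffProj P h C₂ z ∂Pk = 0 := by
  have hexpand : ∀ z, hoeffProj P h C₁ z * hoeffProj P h C₂ z =
      ∑ J₂ ∈ C₂.powerset, (-1 : ℝ) ^ (#C₂ - #J₂) *
        ∑ J₁ ∈ C₁.powerset, (-1 : ℝ) ^ (#C₁ - #J₁) * (margE P h J₁ z * margE P h J₂ z) := by
    intro z
    rw [hoeffProj, hoeffProj, sum_mul_sum, sum_comm]
    refine sum_congr rfl fun J₂ _ => ?_
    rw [mul_sum]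
    exact sum_congr rfl fun J₁ _ => by ring
  have hint : ∀ J₂, Integrable (fun z => ∑ J₁ ∈ C₁.powerset,
      (-1 : ℝ) ^ (#C₁ - #J₁) * (margE P h J₁ z * margE P h J₂ z)) Pk := fun J₂ =>
    integrable_finsetSum _ fun J₁ _ => (integrable_margE_mul_margE P hL2 J₁ J₂).const_mul _
  simp_rw [hexpand]
  rw [integral_finsetSum _ fun J₂ _ => (hint J₂).const_mul _]
  refine sum_eq_zero fun J₂ hJ₂ => ?_
  rw [integral_const_mul, integral_finsetSum _ fun J₁ _ =>
    (integrable_margE_mul_margE P hL2 J₁ J₂).const_mul _]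
  rw [sum_congr rfl fun J₁ _ => by
    rw [integral_const_mul, integral_margE_mul_margE_inter P hL2 J₁ J₂]]
  rw [sum_powerset_neg_one_pow_mul_inter_eq_zero
    (fun A => ∫ z, margE P h A z * margE P h J₂ z ∂Pk), mul_zero]
  exact fun hsub => hC (hsub.trans (mem_powerset.mp hJ₂))

end Hoeffding

theorem hoeffProj_orthogonal_general {Z : Type*} [MeasurableSpace Z]
    (P : Measure Z) [IsProbabilityMeasure P]
    (k : ℕ) (h : (Fin k → Z) → ℝ)
    (hL2 : MemLp h 2 (Measure.pi fun _ : Fin k => P))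
    (C₁ C₂ : Finset (Fin k)) (hne : C₁ ≠ C₂) :
    ∫ z : Fin k → Z, hoeffProj P h C₁ z * hoeffProj P h C₂ z
      ∂(Measure.pi fun _ : Fin k => P) = 0 := by
  by_cases hC : C₁ ⊆ C₂
  · have hC' : ¬C₂ ⊆ C₁ := fun h' => hne (hC.antisymm h')
    simp_rw [mul_comm (hoeffProj P h C₁ _)]
    exact integral_hoeffProj_mul_hoeffProj_eq_zero P hL2 hC'
  · exact integral_hoeffProj_mul_hoeffProj_eq_zero P hL2 hC

/-- **Mutual orthogonality of the canonical Hoeffding projections.**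
For any two distinct subsets `C₁ ≠ C₂` of `{1,…,k}`, the projections indexed by `C₁`
and `C₂` are orthogonal in `L²(P^{⊗k})`. -/
theorem hoeffProj_orthogonal {Z : Type*} [MeasurableSpace Z]
    (P : Measure Z) [IsProbabilityMeasure P]
    (k : ℕ) (h : (Fin k → Z) → ℝ) (hmeas : Measurable h)
    (hsymm : ∀ (σ : Equiv.Perm (Fin k)) (z : Fin k → Z), h (z ∘ σ) = h z)
    (hL2 : MemLp h 2 (Measure.pi fun _ : Fin k => P))
    (C₁ C₂ : Finset (Fin k)) (hne : C₁ ≠ C₂) :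
    ∫ z : Fin k → Z, hoeffProj P h C₁ z * hoeffProj P h C₂ z
      ∂(Measure.pi fun _ : Fin k => P) = 0 :=
  hoeffProj_orthogonal_general P k h hL2 C₁ C₂ hne
end

section
/- (Strictly increasing differences of the surrogate MSE envelope) Fix n ≥ 1, M ≥ 1 with M ≤ n, and constants B₀ > 0, β > 0. For a spectrum vector ζ = (ζ_1,...,ζ_M) with nonnegative entries, define the continuous MSE envelope 𝓜(α; ζ) = B₀ n^{−2β} α^{−2β} + Σ_{c=1}^{M} ζ_c · H_c(α) for α ∈ (0, 1], where H_c(α) = (α^c/c!) ∏_{j=0}^{c−1}(αn − j). Suppose ζ⁽²⁾ dominates ζ⁽¹⁾ in the high-order sense: there exists a critical order c* such that ζ⁽²⁾_c = ζ⁽¹⁾_c for all c < c*, ζ⁽²⁾_c ≥ ζ⁽¹⁾_c for all c ≥ c*, with strict inequality for at least one c ≥ c*. Then for all α in ((M−1)/n, 1], the partial derivatives satisfy ∂𝓜/∂α(α; ζ⁽²⁾) > ∂𝓜/∂α(α; ζ⁽¹⁾); equivalently, for all (M−1)/n < α < α' ≤ 1, 𝓜(α'; ζ⁽²⁾) − 𝓜(α;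 ζ⁽²⁾) > 𝓜(α'; ζ⁽¹⁾) − 𝓜(α; ζ⁽¹⁾). -/
/-!
The bias term `B₀ n^{-2β} α^{-2β}` does not depend on `ζ`, so
`𝓜(·; ζ⁽²⁾) - 𝓜(·; ζ⁽¹⁾) = Σ_c (ζ⁽²⁾_c - ζ⁽¹⁾_c) H_c` has nonnegative coefficients, not all zero.
Writing `H_c(α) = (c!)⁻¹ ∏_{j<c} α (α n - j)`, on `α n > c - 1` every factor is positive with
positive derivative `2 α n - j`, so `H_c' > 0` there. Hence the difference has positive derivative
on `α > (M - 1)/n` and is strictly increasing there.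
-/

/-- The continuous extension `H_c(α) = (α^c/c!) ∏_{j=0}^{c−1} (αn − j)` of the `c`-th
order variance inflation multiplier of subagging. -/
noncomputable def Hmul (n c : ℕ) (α : ℝ) : ℝ :=
  α ^ c / (Nat.factorial c : ℝ) * ∏ j ∈ Finset.range c, (α * n - j)

/-- The continuous finite-sample MSE envelope
`𝓜(α; ζ) = B₀ n^{−2β} α^{−2β} + Σ_{c=1}^{M} ζ_c H_c(α)`. -/
noncomputable def Menv (n M : ℕ) (B₀ β : ℝ) (ζ : ℕ → ℝ) (α : ℝ) : ℝ :=
  B₀ * (n : ℝ) ^ (-(2 * β)) * α ^ (-(2 * β)) + ∑ c ∈ Finset.Icc 1 M, ζ c * Hmul n c α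

open Finset
open scoped Nat

theorem deriv_finset_prod_pos {ι : Type*} {s : Finset ι} (hs : s.Nonempty) {f : ι → ℝ → ℝ}
    {x : ℝ} (hd : ∀ i ∈ s, DifferentiableAt ℝ (f i) x) (hf : ∀ i ∈ s, 0 < f i x)
    (hf' : ∀ i ∈ s, 0 < deriv (f i) x) :
    0 < deriv (fun y => ∏ i ∈ s, f i y) x := by
  classical
  have hprod := HasDerivAt.fun_finsetProd fun i hi => (hd i hi).hasDerivAt
  rw [hprod.deriv]
  exact sum_pos (fun i hi => smul_pos (prod_pos fun j hj => hf j (mem_of_mem_erase hj))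
    (hf' i hi)) hs

theorem Hmul_eq_inv_factorial_mul_prod (n c : ℕ) (α : ℝ) :
    Hmul n c α = (c ! : ℝ)⁻¹ * ∏ j ∈ range c, α * (α * n - j) := by
  rw [Hmul, prod_mul_distrib, prod_const, card_range, div_eq_inv_mul, mul_assoc]

theorem differentiable_Hmul (n c : ℕ) : Differentiable ℝ (Hmul n c) := by
  unfold Hmul
  fun_prop

theorem deriv_Hmul_pos {n c : ℕ} {α : ℝ} (hc : 1 ≤ c) (hα : (c : ℝ) - 1 < α * n) :
    0 < deriv (Hmul n c) α := by
  have hαn : 0 < α * n := by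
    have : (1 : ℝ) ≤ c := by exact_mod_cast hc
    linarith
  have hα₀ : 0 < α := pos_of_mul_pos_left hαn (Nat.cast_nonneg n)
  have hfactor : ∀ j ∈ range c, (j : ℝ) < α * n := fun j hj => by
    have : (j : ℝ) + 1 ≤ c := by exact_mod_cast mem_range.mp hj
    linarith
  have hderiv (j : ℕ) : HasDerivAt (fun y : ℝ => y * (y * n - j)) (2 * α * n - j) α :=
    ((hasDerivAt_id' α).fun_mul (((hasDerivAt_id' α).mul_const (n : ℝ)).sub_const (j : ℝ)))
      |>.congr_deriv (by ring)
  rw [funext (Hmul_eq_inv_factorial_mul_prod n c), deriv_const_mul _ (by fun_prop)]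
  refine mul_pos (by positivity)
    (deriv_finset_prod_pos (nonempty_range_iff.mpr (by omega)) ?_ ?_ ?_)
  · intro j _
    fun_prop
  · intro j hj
    exact mul_pos hα₀ (sub_pos.mpr (hfactor j hj))
  · intro j hj
    rw [(hderiv j).deriv]
    linarith [hfactor j hj]

noncomputable def HmulSum (n M : ℕ) (w : ℕ → ℝ) (α : ℝ) : ℝ :=
  ∑ c ∈ Icc 1 M, w c * Hmul n c α

theorem differentiable_HmulSum (n M : ℕ) (w : ℕ → ℝ) : Differentiable ℝ (HmulSum n M w) := by
  unfold HmulSum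
  have := differentiable_Hmul n
  fun_prop

theorem deriv_HmulSum_pos {n M : ℕ} {w : ℕ → ℝ} {α : ℝ} (hw : ∀ c ∈ Icc 1 M, 0 ≤ w c)
    (hw' : ∃ c ∈ Icc 1 M, 0 < w c) (hα : (M : ℝ) - 1 < α * n) :
    0 < deriv (HmulSum n M w) α := by
  have hderiv (c : ℕ) (hc : c ∈ Icc 1 M) : 0 < deriv (Hmul n c) α := by
    obtain ⟨hc1, hcM⟩ := mem_Icc.mp hc
    have : (c : ℝ) ≤ M := by exact_mod_cast hcM
    exact deriv_Hmul_pos hc1 (by linarith)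
  unfold HmulSum
  rw [deriv_fun_sum fun c _ => ((differentiable_Hmul n c).const_mul (w c)).differentiableAt]
  simp only [deriv_const_mul_field']
  obtain ⟨c₀, hc₀, hwc₀⟩ := hw'
  exact sum_pos' (fun c hc => mul_nonneg (hw c hc) (hderiv c hc).le)
    ⟨c₀, hc₀, mul_pos hwc₀ (hderiv c₀ hc₀)⟩

theorem strictMonoOn_HmulSum {n M : ℕ} {w : ℕ → ℝ} (hn : 0 < n) (hw : ∀ c ∈ Icc 1 M, 0 ≤ w c)
    (hw' : ∃ c ∈ Icc 1 M, 0 < w c) :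
    StrictMonoOn (HmulSum n M w) (Set.Ioi (((M : ℝ) - 1) / n)) := by
  refine strictMonoOn_of_deriv_pos (convex_Ioi _)
    (differentiable_HmulSum n M w).continuous.continuousOn fun α hα => ?_
  rw [interior_Ioi, Set.mem_Ioi, div_lt_iff₀ (by exact_mod_cast hn)] at hα
  exact deriv_HmulSum_pos hw hw' hα

theorem Menv_eq_add_HmulSum (n M : ℕ) (B₀ β : ℝ) (ζ : ℕ → ℝ) :
    Menv n M B₀ β ζ = (fun α => B₀ * (n : ℝ) ^ (-(2 * β)) * α ^ (-(2 * β))) + HmulSum n M ζ :=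
  rfl

theorem HmulSum_sub (n M : ℕ) (w₁ w₂ : ℕ → ℝ) :
    HmulSum n M (w₂ - w₁) = HmulSum n M w₂ - HmulSum n M w₁ := by
  ext α
  simp only [HmulSum, Pi.sub_apply, sub_mul, sum_sub_distrib]

theorem Menv_eq_Menv_add_HmulSum_sub (n M : ℕ) (B₀ β : ℝ) (ζ₁ ζ₂ : ℕ → ℝ) :
    Menv n M B₀ β ζ₂ = Menv n M B₀ β ζ₁ + HmulSum n M (ζ₂ - ζ₁) := by
  rw [HmulSum_sub, Menv_eq_add_HmulSum, Menv_eq_add_HmulSum]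
  abel

theorem differentiableAt_Menv (n M : ℕ) (B₀ β : ℝ) (ζ : ℕ → ℝ) {α : ℝ} (hα : α ≠ 0) :
    DifferentiableAt ℝ (Menv n M B₀ β ζ) α := by
  rw [Menv_eq_add_HmulSum]
  exact ((differentiableAt_id.rpow_const (Or.inl hα)).const_mul _).add
    (differentiable_HmulSum n M ζ α)

theorem Menv_strictly_increasing_differences_general (n M : ℕ)
    (hn : 1 ≤ n)
    (B₀ β : ℝ)
    (ζ₁ ζ₂ : ℕ → ℝ)
    (cstar : ℕ)
    (hlow : ∀ c, 1 ≤ c → c ≤ M → c < cstar → ζ₂ c = ζ₁ c)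
    (hhigh : ∀ c, 1 ≤ c → c ≤ M → cstar ≤ c → ζ₁ c ≤ ζ₂ c)
    (hstrict : ∃ c, 1 ≤ c ∧ c ≤ M ∧ cstar ≤ c ∧ ζ₁ c < ζ₂ c) :
    (∀ α : ℝ, ((M : ℝ) - 1) / n < α → α ≤ 1 →
      deriv (Menv n M B₀ β ζ₁) α < deriv (Menv n M B₀ β ζ₂) α)
    ∧ (∀ α α' : ℝ, ((M : ℝ) - 1) / n < α → α < α' → α' ≤ 1 →
      Menv n M B₀ β ζ₁ α' - Menv n M B₀ β ζ₁ α
        < Menv n M B₀ β ζ₂ α' - Menv n M B₀ β ζ₂ α) := by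
  have hw : ∀ c ∈ Icc 1 M, 0 ≤ (ζ₂ - ζ₁) c := fun c hc => by
    obtain ⟨hc1, hcM⟩ := mem_Icc.mp hc
    rcases lt_or_ge c cstar with h | h
    · simp [hlow c hc1 hcM h]
    · simpa using hhigh c hc1 hcM h
  obtain ⟨c₀, hc₀1, hc₀M, -, hc₀⟩ := hstrict
  have hw' : ∃ c ∈ Icc 1 M, 0 < (ζ₂ - ζ₁) c :=
    ⟨c₀, mem_Icc.mpr ⟨hc₀1, hc₀M⟩, by simpa using hc₀⟩
  have hn₀ : (0 : ℝ) < n := by exact_mod_cast hn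
  have hlower : (0 : ℝ) ≤ ((M : ℝ) - 1) / n := by
    have : (1 : ℝ) ≤ M := by exact_mod_cast hc₀1.trans hc₀M
    exact div_nonneg (by linarith) hn₀.le
  rw [Menv_eq_Menv_add_HmulSum_sub n M B₀ β ζ₁ ζ₂]
  refine ⟨fun α hα _ => ?_, fun α α' hα hαα' _ => ?_⟩
  · rw [deriv_add (differentiableAt_Menv n M B₀ β ζ₁ (by linarith))
      (differentiable_HmulSum n M _ α), lt_add_iff_pos_right]
    exact deriv_HmulSum_pos hw hw' ((div_lt_iff₀ hn₀).mp hα)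
  · have := strictMonoOn_HmulSum (by omega) hw hw' hα (Set.mem_Ioi.mpr (hα.trans hαα')) hαα'
    simp only [Pi.add_apply]
    linarith

/-- **Strictly increasing differences of the surrogate MSE envelope.**
If the spectrum `ζ⁽²⁾` dominates `ζ⁽¹⁾` in the high-order sense (equal below a critical
order `c*`, `≥` at or above `c*`, strictly greater for at least one `c ≥ c*`), then for
every `α ∈ ((M−1)/n, 1]` the partial derivatives satisfy
`∂𝓜/∂α(α; ζ⁽²⁾) > ∂𝓜/∂α(α; ζ⁽¹⁾)`; equivalently, for all `(M−1)/n < α < α' ≤ 1`,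
`𝓜(α'; ζ⁽²⁾) − 𝓜(α; ζ⁽²⁾) > 𝓜(α'; ζ⁽¹⁾) − 𝓜(α; ζ⁽¹⁾)`. -/
theorem Menv_strictly_increasing_differences (n M : ℕ)
    (hn : 1 ≤ n) (hM : 1 ≤ M) (hMn : M ≤ n)
    (B₀ β : ℝ) (hB₀ : 0 < B₀) (hβ : 0 < β)
    (ζ₁ ζ₂ : ℕ → ℝ) (hζ₁ : ∀ c, 0 ≤ ζ₁ c) (hζ₂ : ∀ c, 0 ≤ ζ₂ c)
    (cstar : ℕ)
    (hlow : ∀ c, 1 ≤ c → c ≤ M → c < cstar → ζ₂ c = ζ₁ c)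
    (hhigh : ∀ c, 1 ≤ c → c ≤ M → cstar ≤ c → ζ₁ c ≤ ζ₂ c)
    (hstrict : ∃ c, 1 ≤ c ∧ c ≤ M ∧ cstar ≤ c ∧ ζ₁ c < ζ₂ c) :
    (∀ α : ℝ, ((M : ℝ) - 1) / n < α → α ≤ 1 →
      deriv (Menv n M B₀ β ζ₁) α < deriv (Menv n M B₀ β ζ₂) α)
    ∧ (∀ α α' : ℝ, ((M : ℝ) - 1) / n < α → α < α' → α' ≤ 1 →
      Menv n M B₀ β ζ₁ α' - Menv n M B₀ β ζ₁ α
        < Menv n M B₀ β ζ₂ α' - Menv n M B₀ β ζ₂ α) :=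
  Menv_strictly_increasing_differences_general n M hn B₀ β ζ₁ ζ₂ cstar hlow hhigh hstrict
end

section
/- (Structural Shift of Optimal Regularization) Fix n ≥ 1, M ≥ 1 with M ≤ n, and constants B₀ > 0, β > 0, and let 𝓜(α; ζ) = B₀ n^{−2β} α^{−2β} + Σ_{c=1}^{M} ζ_c H_c(α) with H_c(α) = (α^c/c!) ∏_{j=0}^{c−1}(αn − j). Suppose ζ⁽²⁾ dominates ζ⁽¹⁾ in the high-order sense: ζ⁽²⁾_c = ζ⁽¹⁾_c for c < c*, ζ⁽²⁾_c ≥ ζ⁽¹⁾_c for c ≥ c*, with strict inequality for at least one c ≥ c*. If α*₁ is a minimizer of 𝓜(·; ζ⁽¹⁾) over the interval [M/n, 1] and α*₂ is a minimizer of 𝓜(·; ζ⁽²⁾) over [M/n, 1], then α*₂ ≤ α*₁. -/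
lemma Hmul_eq (n c : ℕ) (α : ℝ) :
    Hmul n c α = (∏ j ∈ Finset.range c, (α * (α * n - j))) / (Nat.factorial c : ℝ) := by
  unfold Hmul
  rw [Finset.prod_mul_distrib, Finset.prod_const, Finset.card_range]
  ring

lemma Hmul_lt (n c : ℕ) (hc : 1 ≤ c) (a b : ℝ) (h0 : 0 < a)
    (hcn : (c : ℝ) ≤ a * n) (hn : (1:ℝ) ≤ n) (hab : a < b) :
    Hmul n c a < Hmul n c b := by
  rw [Hmul_eq, Hmul_eq]
  have hfac : (0:ℝ) < Nat.factorial c := by positivity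
  rw [div_lt_div_iff_of_pos_right hfac]
  apply Finset.prod_lt_prod_of_nonempty
  · intro j hj
    have hjc : (j:ℝ) < c := by exact_mod_cast Finset.mem_range.mp hj
    have : (0:ℝ) < a * n - j := by linarith
    positivity
  · intro j hj
    have hjc : (j:ℝ) < c := by exact_mod_cast Finset.mem_range.mp hj
    have h1 : (0:ℝ) < a * n - j := by linarith
    have h2 : a * n < b * n := by nlinarith
    nlinarith
  · exact Finset.nonempty_range_iff.mpr (by omega)

/-- **Structural Shift of Optimal Regularization.**
If the nonnegative spectrum `ζ⁽²⁾` dominates `ζ⁽¹⁾` in the high-order sense (equal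
below a critical order `c*`, `≥` at or above `c*`, strictly greater for at least one
`c ≥ c*`), and `α*₁`, `α*₂` are minimizers of `𝓜(·; ζ⁽¹⁾)`, `𝓜(·; ζ⁽²⁾)` over the
interval `[M/n, 1]`, then `α*₂ ≤ α*₁`. -/
theorem structural_shift_optimal_regularization (n M : ℕ)
    (hn : 1 ≤ n) (hM : 1 ≤ M) (hMn : M ≤ n)
    (B₀ β : ℝ) (hB₀ : 0 < B₀) (hβ : 0 < β)
    (ζ₁ ζ₂ : ℕ → ℝ) (hζ₁ : ∀ c, 0 ≤ ζ₁ c) (hζ₂ : ∀ c, 0 ≤ ζ₂ c)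
    (cstar : ℕ)
    (hlow : ∀ c, 1 ≤ c → c ≤ M → c < cstar → ζ₂ c = ζ₁ c)
    (hhigh : ∀ c, 1 ≤ c → c ≤ M → cstar ≤ c → ζ₁ c ≤ ζ₂ c)
    (hstrict : ∃ c, 1 ≤ c ∧ c ≤ M ∧ cstar ≤ c ∧ ζ₁ c < ζ₂ c)
    (α₁ α₂ : ℝ)
    (hα₁mem : α₁ ∈ Set.Icc ((M : ℝ) / n) 1)
    (hα₂mem : α₂ ∈ Set.Icc ((M : ℝ) / n) 1)
    (hα₁min : ∀ α ∈ Set.Icc ((M : ℝ) / n) 1, Menv n M B₀ β ζ₁ α₁ ≤ Menv n M B₀ β ζ₁ α)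
    (hα₂min : ∀ α ∈ Set.Icc ((M : ℝ) / n) 1, Menv n M B₀ β ζ₂ α₂ ≤ Menv n M B₀ β ζ₂ α) :
    α₂ ≤ α₁ := by
  by_contra hcon
  push_neg at hcon
  have hn1 : (1:ℝ) ≤ n := by exact_mod_cast hn
  have hn0 : (0:ℝ) < n := by linarith
  have hM1 : (1:ℝ) ≤ M := by exact_mod_cast hM
  have hα₁pos : 0 < α₁ := lt_of_lt_of_le (by positivity) hα₁mem.1
  have hα₁n : (M:ℝ) ≤ α₁ * n := by
    have := hα₁mem.1
    rw [div_le_iff₀ hn0] at this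
    exact this
  -- ζ₂ c - ζ₁ c ≥ 0 for all relevant c
  have hδ : ∀ c, 1 ≤ c → c ≤ M → ζ₁ c ≤ ζ₂ c := by
    intro c h1 h2
    rcases lt_or_ge c cstar with h | h
    · exact le_of_eq (hlow c h1 h2 h).symm
    · exact hhigh c h1 h2 h
  -- each Hmul is strictly increasing from α₁ to α₂
  have hH : ∀ c ∈ Finset.Icc 1 M, Hmul n c α₁ < Hmul n c α₂ := by
    intro c hc
    obtain ⟨h1, h2⟩ := Finset.mem_Icc.mp hc
    refine Hmul_lt n c h1 α₁ α₂ hα₁pos ?_ hn1 hcon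
    have : (c:ℝ) ≤ M := by exact_mod_cast h2
    linarith
  -- the two optimality inequalities
  have e1 := hα₁min α₂ hα₂mem
  have e2 := hα₂min α₁ hα₁mem
  unfold Menv at e1 e2
  -- combined sum inequality
  have hsum : ∑ c ∈ Finset.Icc 1 M, (ζ₁ c * Hmul n c α₂ + ζ₂ c * Hmul n c α₁)
      < ∑ c ∈ Finset.Icc 1 M, (ζ₁ c * Hmul n c α₁ + ζ₂ c * Hmul n c α₂) := by
    obtain ⟨c₀, hc1, hc2, _, hclt⟩ := hstrict
    apply Finset.sum_lt_sum
    · intro c hc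
      obtain ⟨h1, h2⟩ := Finset.mem_Icc.mp hc
      have hd := hδ c h1 h2
      have hh := hH c hc
      nlinarith [mul_nonneg (sub_nonneg.mpr hd) (sub_nonneg.mpr hh.le)]
    · refine ⟨c₀, Finset.mem_Icc.mpr ⟨hc1, hc2⟩, ?_⟩
      have hh := hH c₀ (Finset.mem_Icc.mpr ⟨hc1, hc2⟩)
      nlinarith
  rw [Finset.sum_add_distrib, Finset.sum_add_distrib] at hsum
  linarith
end
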